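/- arXiv:2102.09101 — 4 statements merged into one kernel-verified Lean document; each statement's English description precedes it below -/
import Mathlib

section
/- Let C be a nonempty finite subset of ℝ^d with centroid μ = (1/|C|)·∑_{x∈C} x, and write L(C) = L(C, {μ}). Let k ≥ 1 be an integer and A ≥ 0 a real number. If a point x ∈ ℝ^d satisfies ‖x − μ‖ ≤ √(2·L(C)/|C|) + √(A/(k·|C|)), then L(C, {x}) ≤ 5·L(C) + 2A/k. -/
/-!
By the parallel axis theorem, `L(C, {x}) = L(C) + |C|·‖x − μ‖²`, since the deviations from the
centroid sum to zero. Squaring the hypothesis with `(a + b)² ≤ 2a² + 2b²` bounds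
`|C|·‖x − μ‖²` by `4·L(C) + 2A/k`.
-/

/-- The k-means cost `L(X, S) = ∑_{x∈X} min_{c∈S} ‖x − c‖²`. -/
noncomputable def kmeansCost {d : ℕ} (X S : Finset (EuclideanSpace ℝ (Fin d))) : ℝ :=
  ∑ x ∈ X, sInf ((fun c => ‖x - c‖ ^ 2) '' (S : Set (EuclideanSpace ℝ (Fin d))))

open Finset RealInnerProductSpace

lemma Real.sq_sqrt_add_sqrt_le {a b : ℝ} (ha : 0 ≤ a) (hb : 0 ≤ b) :
    (√a + √b) ^ 2 ≤ 2 * a + 2 * b := by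
  have : (√a + √b) ^ 2 ≤ 2 * (√a ^ 2 + √b ^ 2) := add_sq_le
  rwa [Real.sq_sqrt ha, Real.sq_sqrt hb, mul_add] at this

section ParallelAxis

variable {ι E : Type*} [NormedAddCommGroup E] [InnerProductSpace ℝ E]

lemma Finset.sum_sub_centroid_eq_zero (s : Finset ι) (p : ι → E) :
    ∑ i ∈ s, (p i - (#s : ℝ)⁻¹ • ∑ j ∈ s, p j) = 0 := by
  rcases s.eq_empty_or_nonempty with rfl | hs
  · simp
  have hn : (#s : ℝ) ≠ 0 := by exact_mod_cast hs.card_pos.ne'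
  rw [sum_sub_distrib, sum_const, ← Nat.cast_smul_eq_nsmul ℝ, smul_smul, mul_inv_cancel₀ hn,
    one_smul, sub_self]

lemma Finset.sum_norm_sub_sq_of_sum_sub_eq_zero {s : Finset ι} {p : ι → E} {μ : E}
    (hμ : ∑ i ∈ s, (p i - μ) = 0) (x : E) :
    ∑ i ∈ s, ‖p i - x‖ ^ 2 = ∑ i ∈ s, ‖p i - μ‖ ^ 2 + #s * ‖x - μ‖ ^ 2 := by
  have hsplit (i : ι) : ‖p i - x‖ ^ 2 = ‖p i - μ‖ ^ 2 + 2 * ⟪p i - μ, μ - x⟫ + ‖μ - x‖ ^ 2 := by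
    rw [← norm_add_sq_real, sub_add_sub_cancel]
  simp only [hsplit, sum_add_distrib, ← mul_sum, ← sum_inner, hμ, inner_zero_left, sum_const,
    nsmul_eq_mul, norm_sub_rev μ x]
  ring

end ParallelAxis

lemma kmeansCost_singleton {d : ℕ} (X : Finset (EuclideanSpace ℝ (Fin d)))
    (c : EuclideanSpace ℝ (Fin d)) :
    kmeansCost X {c} = ∑ x ∈ X, ‖x - c‖ ^ 2 := by
  simp [kmeansCost]

lemma kmeansCost_singleton_nonneg {d : ℕ} (X : Finset (EuclideanSpace ℝ (Fin d)))
    (c : EuclideanSpace ℝ (Fin d)) : 0 ≤ kmeansCost X {c} := by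
  rw [kmeansCost_singleton]
  positivity

lemma kmeansCost_singleton_eq_centroid_add {d : ℕ} (C : Finset (EuclideanSpace ℝ (Fin d)))
    (x : EuclideanSpace ℝ (Fin d)) :
    kmeansCost C {x} = kmeansCost C {(#C : ℝ)⁻¹ • ∑ y ∈ C, y}
      + #C * ‖x - (#C : ℝ)⁻¹ • ∑ y ∈ C, y‖ ^ 2 := by
  simp only [kmeansCost_singleton]
  exact sum_norm_sub_sq_of_sum_sub_eq_zero (sum_sub_centroid_eq_zero C id) x

theorem cost_of_near_centroid_point_general {d : ℕ} (C : Finset (EuclideanSpace ℝ (Fin d)))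
    (μ : EuclideanSpace ℝ (Fin d))
    (hμ : μ = (C.card : ℝ)⁻¹ • ∑ x ∈ C, x)
    (k : ℕ) (A : ℝ) (hA : 0 ≤ A) (x : EuclideanSpace ℝ (Fin d))
    (hx : ‖x - μ‖ ≤ Real.sqrt (2 * kmeansCost C {μ} / C.card)
        + Real.sqrt (A / (k * C.card))) :
    kmeansCost C {x} ≤ 5 * kmeansCost C {μ} + 2 * A / k := by
  rcases C.eq_empty_or_nonempty with rfl | hC
  · simp only [kmeansCost, sum_empty]
    positivity
  have hn : (0 : ℝ) < #C := by exact_mod_cast hC.card_pos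
  have hL := kmeansCost_singleton_nonneg C μ
  have hdist : ‖x - μ‖ ^ 2 ≤ 2 * (2 * kmeansCost C {μ} / #C) + 2 * (A / (k * #C)) :=
    (pow_le_pow_left₀ (norm_nonneg _) hx 2).trans
      (Real.sq_sqrt_add_sqrt_le (by positivity) (by positivity))
  have hspread : #C * ‖x - μ‖ ^ 2 ≤ 4 * kmeansCost C {μ} + 2 * A / k :=
    calc #C * ‖x - μ‖ ^ 2 ≤ #C * (2 * (2 * kmeansCost C {μ} / #C) + 2 * (A / (k * #C))) := by
          gcongr
      _ = 4 * kmeansCost C {μ} + 2 * A / k := by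
          field_simp
          ring
  rw [kmeansCost_singleton_eq_centroid_add C x, ← hμ]
  linarith

/-- If `x` is within distance `√(2·L(C)/|C|) + √(A/(k·|C|))` of the centroid `μ` of `C`,
then `L(C, {x}) ≤ 5·L(C) + 2A/k`, where `L(C) = L(C, {μ})`. -/
theorem cost_of_near_centroid_point {d : ℕ} (C : Finset (EuclideanSpace ℝ (Fin d)))
    (hC : C.Nonempty) (μ : EuclideanSpace ℝ (Fin d))
    (hμ : μ = (C.card : ℝ)⁻¹ • ∑ x ∈ C, x)
    (k : ℕ) (hk : 1 ≤ k) (A : ℝ) (hA : 0 ≤ A) (x : EuclideanSpace ℝ (Fin d))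
    (hx : ‖x - μ‖ ≤ Real.sqrt (2 * kmeansCost C {μ} / C.card)
        + Real.sqrt (A / (k * C.card))) :
    kmeansCost C {x} ≤ 5 * kmeansCost C {μ} + 2 * A / k :=
  cost_of_near_centroid_point_general C μ hμ k A hA x hx
end

section
/- Let α ≥ 1, let k ≥ 2 and t ≥ 2 be integers, and let x_1, …, x_t ∈ ℝ^d. Suppose D ≥ 0 is such that {x_1, …, x_{t−1}} can be partitioned into k−1 sets each of diameter at most D, and suppose ‖x_t − x_i‖ > √(t·α)·D for all 1 ≤ i ≤ t−1. Then for every nonempty subset S ⊆ {x_1, …, x_{t−1}}, L({x_1, …, x_t}, S) > α·L_k({x_1, …, x_t}). In particular, any α-approximate set of centers chosen from among the first t−1 points of an (α, k)-sequence must fail, so x_t must be selected. -/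
open scoped Classical

/-- `L_k(X)`: the infimum of `L(X, S)` over all sets `S` with `|S| = k`. -/
noncomputable def kmeansOpt {d : ℕ} (k : ℕ) (X : Finset (EuclideanSpace ℝ (Fin d))) : ℝ :=
  sInf {r : ℝ | ∃ S : Finset (EuclideanSpace ℝ (Fin d)), S.card = k ∧ kmeansCost X S = r}

/-!
Place one center at `x_t` and one in each of the `k - 1` clusters of diameter `≤ D`: every one of
the at most `t` points is then within `D` of a center, so `L_k ≤ t·D²`. A set of centers avoiding
`x_t` leaves `x_t` alone at squared distance `> t·α·D²`, so its cost exceeds `α·L_k`.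
-/

theorem exists_card_le_forall_exists_dist_le {E : Type*} [PseudoMetricSpace E] [Nonempty E]
    {m : ℕ} {A : Set E} (G : Fin m → Set E) (hA : A ⊆ ⋃ i, G i) {D : ℝ} (hD : 0 ≤ D)
    (hG : ∀ i, Metric.ediam (G i) ≤ ENNReal.ofReal D) :
    ∃ C : Finset E, C.card ≤ m ∧ ∀ a ∈ A, ∃ c ∈ C, dist a c ≤ D := by
  let center : Fin m → E := fun i => if h : (G i).Nonempty then h.some else Classical.ofNonempty
  refine ⟨Finset.univ.image center, Finset.card_image_le.trans (by simp), fun a ha => ?_⟩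
  obtain ⟨i, hai⟩ := Set.mem_iUnion.mp (hA ha)
  have hGi : (G i).Nonempty := ⟨a, hai⟩
  have hcenter : center i ∈ G i := by
    simp only [center, dif_pos hGi]
    exact hGi.some_mem
  refine ⟨center i, Finset.mem_image_of_mem _ (Finset.mem_univ i), ?_⟩
  exact (edist_le_ofReal hD).mp ((Metric.edist_le_ediam_of_mem hai hcenter).trans (hG i))

section KMeans

variable {d : ℕ} {X S T : Finset (EuclideanSpace ℝ (Fin d))} {y : EuclideanSpace ℝ (Fin d)}

theorem bddBelow_image_sq_norm_sub :
    BddBelow ((fun c => ‖y - c‖ ^ 2) '' (S : Set (EuclideanSpace ℝ (Fin d)))) :=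
  ⟨0, by rintro r ⟨c, _, rfl⟩; positivity⟩

theorem kmeansCost_nonneg : 0 ≤ kmeansCost X S :=
  Finset.sum_nonneg fun _ _ => Real.sInf_nonneg (by rintro r ⟨c, _, rfl⟩; positivity)

theorem kmeansCost_le_of_subset (hS : S.Nonempty) (hST : S ⊆ T) :
    kmeansCost X T ≤ kmeansCost X S :=
  Finset.sum_le_sum fun _ _ =>
    csInf_le_csInf bddBelow_image_sq_norm_sub (hS.to_set.image _)
      (Set.image_mono (Finset.coe_subset.mpr hST))

theorem kmeansCost_le_card_mul_sq {r : ℝ} (h : ∀ y ∈ X, ∃ c ∈ S, ‖y - c‖ ≤ r) :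
    kmeansCost X S ≤ X.card * r ^ 2 := by
  rw [← nsmul_eq_mul, ← Finset.sum_const]
  refine Finset.sum_le_sum fun y hy => ?_
  obtain ⟨c, hc, hyc⟩ := h y hy
  exact (csInf_le bddBelow_image_sq_norm_sub ⟨c, hc, rfl⟩).trans
    (pow_le_pow_left₀ (norm_nonneg _) hyc 2)

theorem sq_lt_kmeansCost {r : ℝ} (hr : 0 ≤ r) (hy : y ∈ X) (hS : S.Nonempty)
    (h : ∀ c ∈ S, r < ‖y - c‖) : r ^ 2 < kmeansCost X S := by
  obtain ⟨c, hc, hmin⟩ := (hS.to_set.image fun c => ‖y - c‖ ^ 2).csInf_mem (S.finite_toSet.image _)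
  calc r ^ 2 < ‖y - c‖ ^ 2 := pow_lt_pow_left₀ (h c hc) hr two_ne_zero
    _ = sInf ((fun c => ‖y - c‖ ^ 2) '' (S : Set (EuclideanSpace ℝ (Fin d)))) := hmin
    _ ≤ kmeansCost X S :=
      Finset.single_le_sum (f := fun y => sInf ((fun c => ‖y - c‖ ^ 2) '' _))
        (fun _ _ => Real.sInf_nonneg (by rintro r ⟨c, _, rfl⟩; positivity)) hy

/-- A nontrivial real vector space is infinite, so `S` can be padded to exactly `k` centers, which
only lowers the cost. -/
theorem kmeansOpt_le_kmeansCost [Nontrivial (EuclideanSpace ℝ (Fin d))] {k : ℕ}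
    (hS : S.Nonempty) (hk : S.card ≤ k) : kmeansOpt k X ≤ kmeansCost X S := by
  have : Infinite (EuclideanSpace ℝ (Fin d)) := PreconnectedSpace.infinite
  obtain ⟨T, hST, hT⟩ := Infinite.exists_superset_card_eq S k hk
  have hbdd : BddBelow {r : ℝ | ∃ T : Finset (EuclideanSpace ℝ (Fin d)),
      T.card = k ∧ kmeansCost X T = r} := ⟨0, by rintro r ⟨T, _, rfl⟩; exact kmeansCost_nonneg⟩
  exact (csInf_le hbdd ⟨T, hT, rfl⟩).trans (kmeansCost_le_of_subset hS hST)

theorem kmeansOpt_le_card_mul_sq [Nontrivial (EuclideanSpace ℝ (Fin d))] {k : ℕ} {r : ℝ}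
    (hS : S.Nonempty) (hk : S.card ≤ k) (h : ∀ y ∈ X, ∃ c ∈ S, ‖y - c‖ ≤ r) :
    kmeansOpt k X ≤ X.card * r ^ 2 :=
  (kmeansOpt_le_kmeansCost hS hk).trans (kmeansCost_le_card_mul_sq h)

end KMeans

/-- If `{x_1, …, x_{t−1}}` can be partitioned into `k−1` sets of diameter at most `D`
and `‖x_t − x_i‖ > √(t·α)·D` for all `1 ≤ i ≤ t−1`, then every nonempty set of centers
`S ⊆ {x_1, …, x_{t−1}}` has `L({x_1, …, x_t}, S) > α·L_k({x_1, …, x_t})`: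
an `α`-approximation must select `x_t`. -/
theorem must_select_next_point_of_alpha_k_sequence {d : ℕ} (α : ℝ) (hα : 1 ≤ α)
    (k t : ℕ) (hk : 2 ≤ k) (ht : 2 ≤ t) (x : ℕ → EuclideanSpace ℝ (Fin d))
    (D : ℝ) (hD : 0 ≤ D)
    (hpart : ∃ G : Fin (k - 1) → Set (EuclideanSpace ℝ (Fin d)),
      (⋃ i, G i) = (((Finset.Icc 1 (t - 1)).image x : Finset (EuclideanSpace ℝ (Fin d))) :
        Set (EuclideanSpace ℝ (Fin d))) ∧
      (Pairwise fun i j => Disjoint (G i) (G j)) ∧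
      ∀ i, EMetric.diam (G i) ≤ ENNReal.ofReal D)
    (hfar : ∀ i, 1 ≤ i → i ≤ t - 1 → Real.sqrt ((t : ℝ) * α) * D < ‖x t - x i‖)
    (S : Finset (EuclideanSpace ℝ (Fin d))) (hS : S.Nonempty)
    (hSsub : S ⊆ (Finset.Icc 1 (t - 1)).image x) :
    α * kmeansOpt k ((Finset.Icc 1 t).image x) <
      kmeansCost ((Finset.Icc 1 t).image x) S := by
  obtain ⟨G, hGU, -, hGdiam⟩ := hpart
  have hradius : 0 ≤ Real.sqrt ((t : ℝ) * α) * D := by positivity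
  have : Nontrivial (EuclideanSpace ℝ (Fin d)) := nontrivial_of_ne (x t) (x 1) fun h => by
    simpa [h] using hradius.trans_lt (hfar 1 le_rfl (by omega))
  obtain ⟨C, hCcard, hC⟩ := exists_card_le_forall_exists_dist_le G hGU.ge hD hGdiam
  have hcover : ∀ y ∈ (Finset.Icc 1 t).image x, ∃ c ∈ insert (x t) C, ‖y - c‖ ≤ D := by
    simp only [Finset.mem_image, Finset.mem_Icc]
    rintro _ ⟨j, hj, rfl⟩
    rcases eq_or_lt_of_le hj.2 with rfl | _
    · exact ⟨x j, Finset.mem_insert_self _ _, by simpa using hD⟩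
    · obtain ⟨c, hc, hjc⟩ := hC (x j) <|
        Finset.mem_coe.mpr (Finset.mem_image_of_mem x (Finset.mem_Icc.mpr ⟨hj.1, by omega⟩))
      exact ⟨c, Finset.mem_insert_of_mem hc, by rwa [← dist_eq_norm]⟩
  have hupper : kmeansOpt k ((Finset.Icc 1 t).image x) ≤ t * D ^ 2 := calc
    _ ≤ ((Finset.Icc 1 t).image x).card * D ^ 2 := kmeansOpt_le_card_mul_sq
        (Finset.insert_nonempty _ _) ((Finset.card_insert_le _ _).trans (by omega)) hcover
    _ ≤ t * D ^ 2 := by gcongr; exact_mod_cast Finset.card_image_le.trans (by simp)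
  have hxt : x t ∈ (Finset.Icc 1 t).image x := Finset.mem_image_of_mem x (by simp; omega)
  have hlower := sq_lt_kmeansCost hradius hxt hS fun c hc => by
    obtain ⟨i, hi, rfl⟩ := Finset.mem_image.mp (hSsub hc)
    exact hfar i (Finset.mem_Icc.mp hi).1 (Finset.mem_Icc.mp hi).2
  rw [mul_pow, Real.sq_sqrt (by positivity)] at hlower
  calc α * kmeansOpt k _ ≤ α * (t * D ^ 2) := by gcongr
    _ = t * α * D ^ 2 := by ring
    _ < _ := hlower
end

section
/- For all positive integers n and k and any function f : {1, …, n} → {1, …, k}, the sum ∑_{t=1}^{n} 1/|{s : 1 ≤ s ≤ t and f(s) = f(t)}| is at most k·(1 + ln n). -/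
/-! In a colour class `C = f⁻¹(c)`, the number of `s ≤ t` with `f s = f t` is the rank of `t`
in `C`, so the class contributes exactly the harmonic number `H_{|C|} ≤ H_n ≤ 1 + ln n`.
Summing over the `k` colours gives the bound. -/

open Finset

theorem harmonic_mono : Monotone harmonic :=
  monotone_nat_of_le_succ fun n => by
    rw [harmonic_succ]
    exact le_add_of_nonneg_right (by positivity)

theorem sum_one_div_card_filter_le_eq_harmonic {α K : Type*} [LinearOrder α] [Field K]
    [CharZero K] (s : Finset α) :
    ∑ t ∈ s, (1 : K) / #{u ∈ s | u ≤ t} = harmonic #s := by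
  induction s using Finset.induction_on_max with
  | empty => simp
  | insert a s ha ih =>
    have ha' : a ∉ s := fun h => lt_irrefl a (ha a h)
    have hmax : ({u ∈ insert a s | u ≤ a} : Finset α) = insert a s :=
      filter_true_of_mem fun u hu => by
        rcases mem_insert.1 hu with rfl | hu
        exacts [le_rfl, (ha u hu).le]
    have hlow : ∀ t ∈ s, ({u ∈ insert a s | u ≤ t} : Finset α) = {u ∈ s | u ≤ t} :=
      fun t ht => by rw [filter_insert, if_neg (not_le.2 (ha t ht))]
    rw [sum_insert ha', hmax, sum_congr rfl fun t ht => by rw [hlow t ht], ih,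
      card_insert_of_notMem ha', harmonic_succ]
    push_cast
    ring

theorem sum_one_div_card_filter_eq_sum_harmonic_fiber {α β K : Type*} [LinearOrder α]
    [DecidableEq β] [Field K] [CharZero K] {s : Finset α} {T : Finset β} {g : α → β}
    (hg : ∀ t ∈ s, g t ∈ T) :
    ∑ t ∈ s, (1 : K) / #{u ∈ s | g u = g t ∧ u ≤ t} =
      ∑ c ∈ T, (harmonic #{u ∈ s | g u = c} : K) := by
  rw [← sum_fiberwise_of_maps_to hg]
  refine sum_congr rfl fun c _ => ?_
  rw [← sum_one_div_card_filter_le_eq_harmonic]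
  refine sum_congr rfl fun t ht => ?_
  rw [mem_filter] at ht
  rw [filter_filter, ht.2]

theorem Icc_filter_eq_apply_eq_of_le {f : ℕ → ℕ} {n t : ℕ} (ht : t ≤ n) :
    ({s ∈ Icc 1 t | f s = f t} : Finset ℕ) = {s ∈ Icc 1 n | f s = f t ∧ s ≤ t} := by
  ext s
  simp only [mem_filter, mem_Icc]
  omega

theorem harmonic_class_sum_bound_general (n k : ℕ) (f : ℕ → ℕ)
    (hf : ∀ s ∈ Finset.Icc 1 n, f s ∈ Finset.Icc 1 k) :
    ∑ t ∈ Finset.Icc 1 n,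
        (1 : ℝ) / ((Finset.Icc 1 t).filter (fun s => f s = f t)).card
      ≤ k * (1 + Real.log n) := by
  have harmonic_fiber_le (c : ℕ) :
      (harmonic #{s ∈ Icc 1 n | f s = c} : ℝ) ≤ 1 + Real.log n := by
    calc (harmonic #{s ∈ Icc 1 n | f s = c} : ℝ) ≤ harmonic n := by
          refine Rat.cast_le.2 (harmonic_mono ?_)
          simpa using card_filter_le (Icc 1 n) _
      _ ≤ 1 + Real.log n := harmonic_le_one_add_log n
  calc ∑ t ∈ Icc 1 n, (1 : ℝ) / #{s ∈ Icc 1 t | f s = f t}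
      = ∑ t ∈ Icc 1 n, (1 : ℝ) / #{s ∈ Icc 1 n | f s = f t ∧ s ≤ t} :=
        sum_congr rfl fun t ht => by rw [Icc_filter_eq_apply_eq_of_le (mem_Icc.1 ht).2]
    _ = ∑ c ∈ Icc 1 k, (harmonic #{s ∈ Icc 1 n | f s = c} : ℝ) :=
        sum_one_div_card_filter_eq_sum_harmonic_fiber hf
    _ ≤ ∑ _c ∈ Icc 1 k, (1 + Real.log n) := sum_le_sum fun c _ => harmonic_fiber_le c
    _ = k * (1 + Real.log n) := by simp [mul_add]

/-- For any `f : {1, …, n} → {1, …, k}`, the sum over `t` of the reciprocal of the number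
of indices `s ≤ t` with `f(s) = f(t)` is at most `k·(1 + ln n)`. -/
theorem harmonic_class_sum_bound (n k : ℕ) (hn : 0 < n) (hk : 0 < k) (f : ℕ → ℕ)
    (hf : ∀ s ∈ Finset.Icc 1 n, f s ∈ Finset.Icc 1 k) :
    ∑ t ∈ Finset.Icc 1 n,
        (1 : ℝ) / ((Finset.Icc 1 t).filter (fun s => f s = f t)).card
      ≤ k * (1 + Real.log n) :=
  harmonic_class_sum_bound_general n k f hf
end

section
/- Let X ⊆ X' ⊆ ℝ^d be finite sets, let k ≥ 1 be an integer, and let 0 ≤ P ≤ P'. Suppose X is partitioned into sets C_1, …, C_k with points z_i ∈ ℝ^d such that ‖x − z_i‖ ≤ 4P for all x ∈ C_i; suppose X' is partitioned into sets C'_1, …, C'_k with points w_j ∈ ℝ^d such that ‖x − w_j‖ ≤ 4P' for all x ∈ C'_j; and suppose ‖w_a − w_b‖ > 16·P' for all a ≠ b. Then the earlier clusters nest into the later ones: for every i there exists j with C_i ⊆ C'_j. -/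
/-!
Two points of one old cluster are at most `8P ≤ 8P'` apart. If they lay in different new
clusters `C'_a`, `C'_b`, the triangle inequality would give `‖w_a - w_b‖ ≤ 4P' + 8P' + 4P'`,
contradicting the separation `16P'` of the new centres.
-/

section SeparatedCover

variable {α ι : Type*} [PseudoMetricSpace α] {C : ι → Set α} {w : ι → α} {r s : ℝ}

theorem eq_of_dist_le_of_separated (hsep : ∀ a b, a ≠ b → 2 * r + s < dist (w a) (w b))
    {a b : ι} {x y : α} (hx : dist x (w a) ≤ r) (hy : dist y (w b) ≤ r)
    (hxy : dist x y ≤ s) : a = b := by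
  by_contra hab
  have hwab : dist (w a) (w b) ≤ dist x (w a) + dist x y + dist y (w b) :=
    calc dist (w a) (w b) ≤ dist (w a) x + dist x (w b) := dist_triangle _ _ _
      _ ≤ dist (w a) x + (dist x y + dist y (w b)) := by
        gcongr; exact dist_triangle _ _ _
      _ = dist x (w a) + dist x y + dist y (w b) := by rw [dist_comm (w a) x]; ring
  linarith [hsep a b hab]

theorem exists_subset_of_separated_cover [Nonempty ι] {S : Set α} (hS : S ⊆ ⋃ j, C j)
    (hSdiam : ∀ x ∈ S, ∀ y ∈ S, dist x y ≤ s) (hC : ∀ j, ∀ x ∈ C j, dist x (w j) ≤ r)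
    (hsep : ∀ a b, a ≠ b → 2 * r + s < dist (w a) (w b)) :
    ∃ j, S ⊆ C j := by
  rcases S.eq_empty_or_nonempty with rfl | ⟨x₀, hx₀⟩
  · exact ⟨Classical.arbitrary ι, Set.empty_subset _⟩
  obtain ⟨j, hx₀j⟩ := Set.mem_iUnion.1 (hS hx₀)
  refine ⟨j, fun x hx => ?_⟩
  obtain ⟨j', hxj'⟩ := Set.mem_iUnion.1 (hS hx)
  obtain rfl : j' = j :=
    eq_of_dist_le_of_separated hsep (hC j' x hxj') (hC j x₀ hx₀j) (hSdiam x hx x₀ hx₀)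
  exact hxj'

end SeparatedCover

theorem clusters_nest_general {d : ℕ} (X X' : Set (EuclideanSpace ℝ (Fin d))) (hXX' : X ⊆ X')
    (k : ℕ) (P P' : ℝ) (hPP' : P ≤ P')
    (C : Fin k → Set (EuclideanSpace ℝ (Fin d)))
    (hCu : (⋃ i, C i) = X)
    (z : Fin k → EuclideanSpace ℝ (Fin d)) (hz : ∀ i, ∀ x ∈ C i, ‖x - z i‖ ≤ 4 * P)
    (C' : Fin k → Set (EuclideanSpace ℝ (Fin d)))
    (hC'u : (⋃ j, C' j) = X')
    (w : Fin k → EuclideanSpace ℝ (Fin d)) (hw : ∀ j, ∀ x ∈ C' j, ‖x - w j‖ ≤ 4 * P')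
    (hwfar : ∀ a b, a ≠ b → 16 * P' < ‖w a - w b‖) :
    ∀ i, ∃ j, C i ⊆ C' j := by
  intro i
  have : Nonempty (Fin k) := ⟨i⟩
  have hcover : C i ⊆ ⋃ j, C' j :=
    (hCu ▸ Set.subset_iUnion C i).trans (hXX'.trans hC'u.ge)
  have hdiam : ∀ x ∈ C i, ∀ y ∈ C i, dist x y ≤ 8 * P' := fun x hx y hy =>
    calc dist x y ≤ dist x (z i) + dist y (z i) := dist_triangle_right _ _ _
      _ ≤ 4 * P + 4 * P := by
        rw [dist_eq_norm, dist_eq_norm]; exact add_le_add (hz i x hx) (hz i y hy)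
      _ ≤ 8 * P' := by linarith
  refine exists_subset_of_separated_cover hcover hdiam
    (fun j x hx => (dist_eq_norm x (w j)).trans_le (hw j x hx)) (fun a b hab => ?_)
  rw [dist_eq_norm]
  linarith [hwfar a b hab]

/-- Clusters nest: if `X ⊆ X'`, `X` is partitioned into `C_1, …, C_k` each within `4P` of a
point `z_i`, `X'` is partitioned into `C'_1, …, C'_k` each within `4P'` of a point `w_j`,
`P ≤ P'`, and the `w_j` are pairwise more than `16P'` apart, then every `C_i` is contained
in some `C'_j`. -/
theorem clusters_nest {d : ℕ} (X X' : Set (EuclideanSpace ℝ (Fin d))) (hXX' : X ⊆ X')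
    (k : ℕ) (hk : 1 ≤ k) (P P' : ℝ) (hP : 0 ≤ P) (hPP' : P ≤ P')
    (C : Fin k → Set (EuclideanSpace ℝ (Fin d)))
    (hCu : (⋃ i, C i) = X) (hCd : Pairwise fun i j => Disjoint (C i) (C j))
    (z : Fin k → EuclideanSpace ℝ (Fin d)) (hz : ∀ i, ∀ x ∈ C i, ‖x - z i‖ ≤ 4 * P)
    (C' : Fin k → Set (EuclideanSpace ℝ (Fin d)))
    (hC'u : (⋃ j, C' j) = X') (hC'd : Pairwise fun i j => Disjoint (C' i) (C' j))
    (w : Fin k → EuclideanSpace ℝ (Fin d)) (hw : ∀ j, ∀ x ∈ C' j, ‖x - w j‖ ≤ 4 * P')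
    (hwfar : ∀ a b, a ≠ b → 16 * P' < ‖w a - w b‖) :
    ∀ i, ∃ j, C i ⊆ C' j :=
  clusters_nest_general X X' hXX' k P P' hPP' C hCu z hz C' hC'u w hw hwfar
end
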